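/- Whitney's density theorem: let g be an invertible totally nonnegative n×n real matrix. Then for every ε > 0 there exists a totally positive n×n real matrix g′ with every entry of g′ − g of absolute value less than ε. Thus GL(n)_{≥0} is the closure of GL(n)_{>0} in the space of invertible real n×n matrices. -/

import Mathlib

open Finset Filter


/-- A square real matrix is totally nonnegative if every minor is nonnegative. -/
def TotallyNonneg {n : ℕ} (A : Matrix (Fin n) (Fin n) ℝ) : Prop :=
  ∀ (m : ℕ) (f g : Fin m → Fin n), StrictMono f → StrictMono g →
    0 ≤ (A.submatrix f g).det

/-- A square real matrix is totally positive if every minor is strictly positive. -/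
def TotallyPos {n : ℕ} (A : Matrix (Fin n) (Fin n) ℝ) : Prop :=
  ∀ (m : ℕ) (f g : Fin m → Fin n), StrictMono f → StrictMono g →
    0 < (A.submatrix f g).det

lemma det_mul_expand {m n : ℕ} (A : Matrix (Fin m) (Fin n) ℝ) (B : Matrix (Fin n) (Fin m) ℝ) :
    (A * B).det = ∑ p : Fin m → Fin n, (∏ i, A i (p i)) * (B.submatrix p id).det := by
  have hrow : (A * B : Matrix (Fin m) (Fin m) ℝ) = fun i => ∑ k, A i k • B k := by
    funext i j
    simp [Matrix.mul_apply, Finset.sum_apply]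
  calc (A*B).det = Matrix.detRowAlternating (fun i => ∑ k, A i k • B k) := by rw [← hrow]; rfl
    _ = ∑ p : Fin m → Fin n, Matrix.detRowAlternating (fun i => A i (p i) • B (p i)) := by
        exact (Matrix.detRowAlternating.toMultilinearMap.map_sum (fun i k => A i k • B k))
    _ = ∑ p : Fin m → Fin n, (∏ i, A i (p i)) • Matrix.detRowAlternating (fun i => B (p i)) := by
        refine Finset.sum_congr rfl fun p _ => ?_
        exact Matrix.detRowAlternating.toMultilinearMap.map_smul_univ _ _
    _ = ∑ p : Fin m → Fin n, (∏ i, A i (p i)) * (B.submatrix p id).det := by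
        refine Finset.sum_congr rfl fun p _ => ?_
        rw [smul_eq_mul]
        rfl

lemma cauchy_binet {m n : ℕ} (A : Matrix (Fin m) (Fin n) ℝ) (B : Matrix (Fin n) (Fin m) ℝ) :
    (A * B).det = ∑ f ∈ Finset.univ.filter (fun f : Fin m → Fin n => StrictMono f),
      (A.submatrix id f).det * (B.submatrix f id).det := by
  classical
  rw [det_mul_expand]
  -- kill non-injective terms
  rw [← Finset.sum_filter_add_sum_filter_not Finset.univ (fun p : Fin m → Fin n => Function.Injective p)]
  have h2 : ∑ p ∈ Finset.univ.filter (fun p : Fin m → Fin n => ¬ Function.Injective p),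
      (∏ i, A i (p i)) * (B.submatrix p id).det = 0 := by
    refine Finset.sum_eq_zero fun p hp => ?_
    simp only [Finset.mem_filter, Function.Injective] at hp
    push_neg at hp
    obtain ⟨a, b, hab, hne⟩ := (Finset.mem_filter.mp (show p ∈ Finset.univ.filter (fun p : Fin m → Fin n => ∃ a b, p a = p b ∧ a ≠ b) from hp)).2
    have : (B.submatrix p id).det = 0 := by
      refine Matrix.det_zero_of_row_eq hne ?_
      funext j
      simp [Matrix.submatrix_apply, hab]
    rw [this, mul_zero]
  rw [h2, add_zero]
  -- bijection with pairs (strict mono, permutation)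
  have h3 : ∑ p ∈ Finset.univ.filter (fun p : Fin m → Fin n => Function.Injective p),
      (∏ i, A i (p i)) * (B.submatrix p id).det
      = ∑ x ∈ (Finset.univ.filter (fun f : Fin m → Fin n => StrictMono f)) ×ˢ
          (Finset.univ : Finset (Equiv.Perm (Fin m))),
        (∏ i, A i ((x.1 ∘ x.2) i)) * (B.submatrix (x.1 ∘ x.2) id).det := by
    refine Finset.sum_nbij' (i := fun p => (p ∘ Tuple.sort p, (Tuple.sort p)⁻¹))
      (j := fun x => x.1 ∘ x.2) ?_ ?_ ?_ ?_ ?_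
    · intro p hp
      simp only [Finset.mem_filter, Finset.mem_univ, true_and] at hp ⊢
      rw [Finset.mem_product]
      refine ⟨?_, Finset.mem_univ _⟩
      simp only [Finset.mem_filter, Finset.mem_univ, true_and]
      exact (Tuple.monotone_sort p).strictMono_of_injective (hp.comp (Tuple.sort p).injective)
    · intro x hx
      rw [Finset.mem_product] at hx
      have hx1 := hx.1
      simp only [Finset.mem_filter, Finset.mem_univ, true_and] at hx1 ⊢
      exact hx1.injective.comp x.2.injective
    · intro p hp
      funext i
      simp [Equiv.apply_symm_apply]
    · intro x hx
      rw [Finset.mem_product] at hx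
      have hx1 := hx.1
      simp only [Finset.mem_filter, Finset.mem_univ, true_and] at hx1
      set p := x.1 ∘ x.2 with hpdef
      have hmono1 : Monotone (x.1 ∘ ⇑(x.2 * Tuple.sort p)) := by
        have : x.1 ∘ ⇑(x.2 * Tuple.sort p) = p ∘ Tuple.sort p := rfl
        rw [this]; exact Tuple.monotone_sort p
      have hmono2 : Monotone (x.1 ∘ ⇑(1 : Equiv.Perm (Fin m))) := by
        simpa using hx1.monotone
      have hkey := Tuple.unique_monotone hmono1 hmono2
      have hperm : x.2 * Tuple.sort p = 1 := by
        apply Equiv.ext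
        intro i
        have := congrFun hkey i
        simp only [Function.comp_apply, Equiv.Perm.coe_one, id_eq] at this ⊢
        exact hx1.injective this
      have hsort : Tuple.sort p = x.2⁻¹ := eq_inv_of_mul_eq_one_right hperm
      have hfst : p ∘ Tuple.sort p = x.1 := by
        have h5 : x.1 ∘ ⇑(x.2 * Tuple.sort p) = p ∘ Tuple.sort p := rfl
        rw [← h5, hperm]
        funext i; simp
      show (p ∘ ⇑(Tuple.sort p), (Tuple.sort p)⁻¹) = x
      rw [hfst, hsort, inv_inv]
    · intro p hp
      have hpp : (p ∘ ⇑(Tuple.sort p)) ∘ ⇑(Tuple.sort p)⁻¹ = p := by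
        funext i; simp
      simp only [hpp]
  rw [h3, Finset.sum_product]
  refine Finset.sum_congr rfl fun f hf => ?_
  simp only [Finset.mem_filter, Finset.mem_univ, true_and] at hf
  -- inner sum over permutations
  have hsub : ∀ σ : Equiv.Perm (Fin m), (B.submatrix (f ∘ σ) id) = (B.submatrix f id).submatrix σ id := by
    intro σ; funext i j; rfl
  calc ∑ σ : Equiv.Perm (Fin m), (∏ i, A i ((f ∘ σ) i)) * (B.submatrix (f ∘ σ) id).det
      = ∑ σ : Equiv.Perm (Fin m), ((Equiv.Perm.sign σ : ℝ) * ∏ i, A i (f (σ i))) * (B.submatrix f id).det := by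
        refine Finset.sum_congr rfl fun σ _ => ?_
        rw [hsub σ, Matrix.det_permute]
        simp only [Function.comp_apply]
        push_cast
        ring
    _ = (∑ σ : Equiv.Perm (Fin m), (Equiv.Perm.sign σ : ℝ) * ∏ i, A i (f (σ i))) * (B.submatrix f id).det := by
        rw [Finset.sum_mul]
    _ = (A.submatrix id f).det * (B.submatrix f id).det := by
        congr 1
        rw [← Matrix.det_transpose (A.submatrix id f), Matrix.det_apply']
        refine Finset.sum_congr rfl fun σ _ => ?_
        simp [Matrix.transpose_apply, Matrix.submatrix_apply]


/-- A generalized polynomial (sum of `m` real-power terms) with `m` distinct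
positive roots has all coefficients zero. -/
lemma descartes : ∀ (m : ℕ) (a c : Fin m → ℝ), StrictMono c →
    ∀ (r : Fin m → ℝ), (∀ i, 0 < r i) → StrictMono r →
    (∀ i, ∑ j, a j * r i ^ c j = 0) → ∀ j, a j = 0 := by
  intro m
  induction m with
  | zero => intro a c _ r _ _ _ j; exact j.elim0
  | succ m ih =>
    intro a c hc r hrpos hrmono hroot
    -- the function and its derivative
    set F : ℝ → ℝ := fun t => ∑ j, a j * t ^ (c j - c 0) with hF
    set F' : ℝ → ℝ := fun t => ∑ j, a j * (c j - c 0) * t ^ (c j - c 0 - 1) with hF'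
    have hderiv : ∀ t : ℝ, 0 < t → HasDerivAt F (F' t) t := by
      intro t ht
      refine HasDerivAt.fun_sum fun j _ => ?_
      have := (Real.hasDerivAt_rpow_const (x := t) (p := c j - c 0) (Or.inl (ne_of_gt ht))).const_mul (a j)
      convert this using 1
      case e'_4 => rfl
      case e'_9 => ring
    have hFroot : ∀ i, F (r i) = 0 := by
      intro i
      have h1 : (r i) ^ (c 0) * F (r i) = ∑ j, a j * r i ^ c j := by
        rw [hF]
        rw [Finset.mul_sum]
        refine Finset.sum_congr rfl fun j _ => ?_
        have h5 : r i ^ c j = r i ^ (c 0) * r i ^ (c j - c 0) := by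
          rw [← Real.rpow_add (hrpos i)]
          have h4 : c 0 + (c j - c 0) = c j := by ring
          rw [h4]
        rw [h5]; ring
      have h2 : (r i) ^ (c 0) * F (r i) = 0 := by rw [h1, hroot i]
      have h3 : (0:ℝ) < (r i) ^ (c 0) := Real.rpow_pos_of_pos (hrpos i) _
      exact (mul_eq_zero.mp h2).resolve_left (ne_of_gt h3)
    -- Rolle between consecutive roots
    have hrolle : ∀ i : Fin m, ∃ ρ ∈ Set.Ioo (r i.castSucc) (r i.succ), F' ρ = 0 := by
      intro i
      have hlt : r i.castSucc < r i.succ := hrmono Fin.castSucc_lt_succ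
      have hpos : ∀ x ∈ Set.Icc (r i.castSucc) (r i.succ), 0 < x :=
        fun x hx => lt_of_lt_of_le (hrpos _) hx.1
      refine exists_hasDerivAt_eq_zero (f := F) (f' := F') hlt ?_ ?_ ?_
      · exact fun x hx => ((hderiv x (hpos x hx)).continuousAt).continuousWithinAt
      · rw [hFroot, hFroot]
      · exact fun x hx => hderiv x (hpos x ⟨le_of_lt hx.1, le_of_lt hx.2⟩)
    choose ρ hρ hρ' using hrolle
    -- apply the inductive hypothesis to F'
    have hIH := ih (fun j => a j.succ * (c j.succ - c 0)) (fun j => c j.succ - c 0 - 1)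
      (fun i j hij => by
        have := hc (Fin.succ_lt_succ_iff.mpr hij)
        show c i.succ - c 0 - 1 < c j.succ - c 0 - 1
        linarith)
      ρ (fun i => lt_trans (hrpos _) (hρ i).1)
      (fun i j hij => by
        have h1 : ρ i < r i.succ := (hρ i).2
        have h2 : r j.castSucc < ρ j := (hρ j).1
        have h3 : r i.succ ≤ r j.castSucc := by
          apply hrmono.le_iff_le.mpr
          rw [Fin.succ_le_castSucc_iff]
          exact hij
        linarith)
      (fun i => by
        have h6 := hρ' i
        rw [hF'] at h6
        dsimp only at h6 ⊢
        rw [Fin.sum_univ_succ] at h6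
        simp only [sub_self, mul_zero, zero_mul, zero_add] at h6
        exact h6)
    have hsucc : ∀ j : Fin m, a j.succ = 0 := by
      intro j
      have hne : c j.succ - c 0 ≠ 0 := by
        have := hc (Fin.succ_pos j)
        intro h; linarith
      have := hIH j
      rcases mul_eq_zero.mp this with h | h
      · exact h
      · exact absurd h hne
    -- now the zeroth coefficient
    have h0 : a 0 * r 0 ^ c 0 = 0 := by
      have := hroot 0
      rw [Fin.sum_univ_succ] at this
      have hz : ∀ j : Fin m, a j.succ * r 0 ^ c j.succ = 0 := by
        intro j; rw [hsucc j, zero_mul]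
      rw [Finset.sum_eq_zero (fun j _ => hz j), add_zero] at this
      exact this
    intro j
    rcases Fin.eq_zero_or_eq_succ j with h | ⟨k, hk⟩
    · subst h
      have hp : (0:ℝ) < r 0 ^ c 0 := Real.rpow_pos_of_pos (hrpos 0) _
      exact (mul_eq_zero.mp h0).resolve_right (ne_of_gt hp)
    · rw [hk]; exact hsucc k



/-- The generalized Vandermonde determinant is positive. -/
lemma gen_vandermonde_pos : ∀ (m : ℕ) (x c : Fin m → ℝ), (∀ i, 0 < x i) → StrictMono x →
    StrictMono c → 0 < (Matrix.of fun i j => x i ^ c j).det := by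
  intro m
  induction m with
  | zero => intro x c _ _ _; rw [Matrix.det_fin_zero]; norm_num
  | succ m ih =>
    intro x c hxpos hx hc
    -- coefficients of the expansion along the last row
    set a : Fin (m+1) → ℝ := fun j =>
      (-1 : ℝ)^((m:ℕ) + (j:ℕ)) *
        (Matrix.of fun i' j' => x (Fin.castSucc i') ^ c (j.succAbove j')).det with ha
    have hexp : ∀ t : ℝ,
        (Matrix.of fun i j => (Function.update x (Fin.last m) t) i ^ c j).det
          = ∑ j, a j * t ^ c j := by
      intro t
      rw [Matrix.det_succ_row _ (Fin.last m)]
      refine Finset.sum_congr rfl fun j _ => ?_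
      have h1 : (Matrix.of fun i j => (Function.update x (Fin.last m) t) i ^ c j)
          (Fin.last m) j = t ^ c j := by
        simp [Function.update_self]
      have h2 : ((Matrix.of fun i j => (Function.update x (Fin.last m) t) i ^ c j).submatrix
          (Fin.last m).succAbove j.succAbove)
          = (Matrix.of fun i' j' => x (Fin.castSucc i') ^ c (j.succAbove j')) := by
        funext i' j'
        simp only [Matrix.submatrix_apply, Matrix.of_apply, Fin.succAbove_last_apply]
        rw [Function.update_of_ne (Fin.ne_last_of_lt (Fin.castSucc_lt_last i'))]
      rw [h1, h2, ha]
      simp only [Fin.val_last]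
      ring
    -- roots coming from repeated rows
    have hroots : ∀ k : Fin m, ∑ j, a j * (x (Fin.castSucc k)) ^ c j = 0 := by
      intro k
      rw [← hexp]
      refine Matrix.det_zero_of_row_eq (Fin.ne_last_of_lt (Fin.castSucc_lt_last k)) ?_
      funext j
      simp only [Matrix.of_apply]
      rw [Function.update_of_ne (Fin.ne_last_of_lt (Fin.castSucc_lt_last k)),
        Function.update_self]
    -- leading coefficient is the principal minor, positive by induction
    have halast : 0 < a (Fin.last m) := by
      have hdet : 0 < (Matrix.of fun i' j' =>
          x (Fin.castSucc i') ^ c ((Fin.last m).succAbove j')).det := by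
        refine ih _ _ (fun i => hxpos _) (hx.comp Fin.strictMono_castSucc) ?_
        intro i j hij
        exact hc (Fin.strictMono_succAbove _ hij)
      have hsign : ((-1 : ℝ))^((m:ℕ) + ((Fin.last m):ℕ)) = 1 := by
        rw [Fin.val_last]
        exact Even.neg_one_pow ⟨m, rfl⟩
      rw [ha]
      simp only [hsign, one_mul]
      exact hdet
    -- the determinant we care about
    have hD : (Matrix.of fun i j => x i ^ c j).det = ∑ j, a j * (x (Fin.last m)) ^ c j := by
      rw [← hexp (x (Fin.last m)), Function.update_eq_self]
    by_contra hP
    push_neg at hP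
    -- case split on whether det is zero or negative
    rcases lt_or_eq_of_le hP with hneg | hzero
    · -- det < 0 : find a root beyond x (last m) using IVT
      set P : ℝ → ℝ := fun t => ∑ j, a j * t ^ c j with hPdef
      have hPx : P (x (Fin.last m)) < 0 := by
        show ∑ j, a j * (x (Fin.last m)) ^ c j < 0
        rw [← hD]; exact hneg
      -- limit of the normalized polynomial
      have hlim : Tendsto (fun t => ∑ j, a j * t ^ (c j - c (Fin.last m))) atTop
          (nhds (a (Fin.last m))) := by
        have : Tendsto (fun t => ∑ j, a j * t ^ (c j - c (Fin.last m))) atTop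
            (nhds (∑ j : Fin (m+1), if j = Fin.last m then a j else 0)) := by
          refine tendsto_finset_sum _ fun j _ => ?_
          by_cases hj : j = Fin.last m
          · subst hj
            simp only [if_pos rfl, sub_self]
            simpa [Real.rpow_zero] using
              (tendsto_const_nhds : Tendsto (fun _ : ℝ => a (Fin.last m)) atTop _)
          · simp only [if_neg hj]
            have hlt : c j < c (Fin.last m) := hc (Fin.lt_last_iff_ne_last.mpr hj)
            have h0 : Tendsto (fun t : ℝ => t ^ (c j - c (Fin.last m))) atTop (nhds 0) := by
              have := tendsto_rpow_neg_atTop (y := c (Fin.last m) - c j) (by linarith)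
              simpa [neg_sub] using this
            simpa using h0.const_mul (a j)
        simpa [Finset.sum_ite_eq' Finset.univ (Fin.last m)] using this
      -- find T beyond x (last m) where P is positive
      have hev : ∀ᶠ t in atTop, 0 < ∑ j, a j * t ^ (c j - c (Fin.last m)) :=
        hlim.eventually (lt_mem_nhds halast)
      obtain ⟨T, hT1, hT2⟩ := (hev.and (eventually_ge_atTop (x (Fin.last m) + 1))).exists
      have hTpos : (0:ℝ) < T := lt_of_lt_of_le (by linarith [hxpos (Fin.last m)]) hT2
      have hPT : 0 < P T := by
        have hsum : P T = T ^ (c (Fin.last m)) * ∑ j, a j * T ^ (c j - c (Fin.last m)) := by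
          rw [hPdef, Finset.mul_sum]
          refine Finset.sum_congr rfl fun j _ => ?_
          have h7 : T ^ c (Fin.last m) * T ^ (c j - c (Fin.last m)) = T ^ c j := by
            rw [← Real.rpow_add hTpos]; congr 1; ring
          calc a j * T ^ c j = a j * (T ^ c (Fin.last m) * T ^ (c j - c (Fin.last m))) := by
                rw [h7]
            _ = T ^ c (Fin.last m) * (a j * T ^ (c j - c (Fin.last m))) := by ring
        rw [hsum]
        exact mul_pos (Real.rpow_pos_of_pos hTpos _) hT1
      -- continuity of P on the interval
      have hcont : ContinuousOn P (Set.Icc (x (Fin.last m)) T) := by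
        intro t ht
        have htpos : 0 < t := lt_of_lt_of_le (hxpos _) ht.1
        have hder : HasDerivAt P (∑ j, a j * (c j * t ^ (c j - 1))) t := by
          refine HasDerivAt.fun_sum fun j _ => ?_
          exact (Real.hasDerivAt_rpow_const (x := t) (p := c j)
            (Or.inl (ne_of_gt htpos))).const_mul (a j)
        exact hder.continuousAt.continuousWithinAt
      have hle : x (Fin.last m) ≤ T := by linarith
      have hmem : (0:ℝ) ∈ Set.Icc (P (x (Fin.last m))) (P T) := ⟨le_of_lt hPx, le_of_lt hPT⟩
      obtain ⟨ξ, hξmem, hξ⟩ := intermediate_value_Icc hle hcont hmem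
      have hξgt : x (Fin.last m) < ξ := by
        rcases lt_or_eq_of_le hξmem.1 with h | h
        · exact h
        · exfalso; rw [← h] at hξ; rw [hξ] at hPx; exact lt_irrefl _ hPx
      -- assemble the m+1 roots
      set r : Fin (m+1) → ℝ := Function.update x (Fin.last m) ξ with hr
      have hrpos : ∀ i, 0 < r i := by
        intro i
        rcases eq_or_ne i (Fin.last m) with h | h
        · subst h; rw [hr, Function.update_self]; linarith [hxpos (Fin.last m)]
        · rw [hr, Function.update_of_ne h]; exact hxpos i
      have hrmono : StrictMono r := by
        intro i j hij
        have hine : i ≠ Fin.last m := Fin.ne_last_of_lt hij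
        rcases eq_or_ne j (Fin.last m) with h | h
        · subst h
          rw [hr, Function.update_self, Function.update_of_ne hine]
          calc x i ≤ x (Fin.last m) := hx.monotone (Fin.le_last i)
            _ < ξ := hξgt
        · rw [hr, Function.update_of_ne h, Function.update_of_ne hine]
          exact hx hij
      have hallroots : ∀ i, ∑ j, a j * r i ^ c j = 0 := by
        intro i
        rcases eq_or_ne i (Fin.last m) with h | h
        · subst h; rw [hr, Function.update_self]; exact hξ
        · obtain ⟨k, hk⟩ := (Fin.eq_castSucc_or_eq_last i).resolve_right h
          subst hk
          rw [hr, Function.update_of_ne h]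
          exact hroots k
      have := descartes (m+1) a c hc r hrpos hrmono hallroots (Fin.last m)
      exact absurd this (ne_of_gt halast)
    · -- det = 0 : x itself gives m+1 roots
      have hallroots : ∀ i, ∑ j, a j * x i ^ c j = 0 := by
        intro i
        rcases eq_or_ne i (Fin.last m) with h | h
        · subst h; rw [← hD]; exact hzero
        · obtain ⟨k, hk⟩ := (Fin.eq_castSucc_or_eq_last i).resolve_right h
          subst hk
          exact hroots k
      have := descartes (m+1) a c hc x hxpos hx hallroots (Fin.last m)
      exact absurd this (ne_of_gt halast)



/-- All minors of the Gaussian matrix are positive. -/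
lemma gauss_tp {n : ℕ} (q : ℝ) (hq0 : 0 < q) (hq1 : q < 1) {m : ℕ} (f h : Fin m → Fin n)
    (hf : StrictMono f) (hh : StrictMono h) :
    0 < (((Matrix.of fun i j : Fin n => q ^ ((((i:ℕ):ℝ) - ((j:ℕ):ℝ))^2)).submatrix f h)).det := by
  set u : Fin m → ℝ := fun i => q ^ ((((f i : ℕ):ℝ))^2) with hu
  set v : Fin m → ℝ := fun j => q ^ ((((h j : ℕ):ℝ))^2) with hv
  set x : Fin m → ℝ := fun i => q ^ (-2 * (((f i : ℕ):ℝ))) with hx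
  set cc : Fin m → ℝ := fun j => (((h j : ℕ):ℝ)) with hcc
  have hmat : ((Matrix.of fun i j : Fin n => q ^ ((((i:ℕ):ℝ) - ((j:ℕ):ℝ))^2)).submatrix f h)
      = Matrix.of (fun i j : Fin m =>
          u i * (Matrix.of (fun i j : Fin m =>
            v j * (Matrix.of fun i j : Fin m => x i ^ cc j) i j) i j)) := by
    funext i j
    simp only [Matrix.submatrix_apply, Matrix.of_apply, hu, hv, hx, hcc]
    have e1 : ((((f i:ℕ):ℝ)) - (((h j:ℕ):ℝ)))^2
        = (((f i:ℕ):ℝ))^2 + ((((h j:ℕ):ℝ))^2 + (-2 * (((f i:ℕ):ℝ))) * (((h j:ℕ):ℝ))) := by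
      ring
    rw [e1, Real.rpow_add hq0, Real.rpow_add hq0, Real.rpow_mul (le_of_lt hq0)]
  rw [hmat, Matrix.det_mul_column, Matrix.det_mul_row]
  have hW : 0 < (Matrix.of fun i j : Fin m => x i ^ cc j).det := by
    refine gen_vandermonde_pos m x cc (fun i => Real.rpow_pos_of_pos hq0 _) ?_ ?_
    · intro i j hij
      refine Real.rpow_lt_rpow_of_exponent_gt hq0 hq1 ?_
      have : (f i : ℕ) < (f j : ℕ) := hf hij
      have : ((f i : ℕ):ℝ) < ((f j : ℕ):ℝ) := by exact_mod_cast this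
      linarith
    · intro i j hij
      have h9 : (h i : ℕ) < (h j : ℕ) := hh hij
      show (((h i : ℕ):ℝ)) < (((h j : ℕ):ℝ))
      exact_mod_cast h9
  have hup : 0 < ∏ i, u i := Finset.prod_pos fun i _ => Real.rpow_pos_of_pos hq0 _
  have hvp : 0 < ∏ i, v i := Finset.prod_pos fun i _ => Real.rpow_pos_of_pos hq0 _
  positivity



lemma witness_minor {n : ℕ} (g : Matrix (Fin n) (Fin n) ℝ)
    (hg : IsUnit g.det) (htnn : TotallyNonneg g) :
    ∀ (d m : ℕ), m + d = n → ∃ s t : Fin m → Fin n, StrictMono s ∧ StrictMono t ∧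
      0 < (g.submatrix s t).det := by
  intro d
  induction d with
  | zero =>
    intro m hm
    simp only [Nat.add_zero] at hm
    subst hm
    refine ⟨id, id, strictMono_id, strictMono_id, ?_⟩
    rw [Matrix.submatrix_id_id]
    rcases lt_or_eq_of_le (by
      have := htnn m id id strictMono_id strictMono_id
      rwa [Matrix.submatrix_id_id] at this) with h | h
    · exact h
    · exact absurd h.symm hg.ne_zero
  | succ d ih =>
    intro m hm
    obtain ⟨s, t, hs, ht, hdet⟩ := ih (m + 1) (by omega)
    -- expand det along the first row; some cofactor is nonzero
    have hexp := Matrix.det_succ_row_zero (g.submatrix s t)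
    have hnz : ∃ j : Fin (m+1),
        ((g.submatrix s t).submatrix Fin.succ j.succAbove).det ≠ 0 := by
      by_contra hall
      push_neg at hall
      rw [Finset.sum_eq_zero (fun j _ => by rw [hall j, mul_zero])] at hexp
      rw [hexp] at hdet
      exact lt_irrefl _ hdet
    obtain ⟨j, hj⟩ := hnz
    refine ⟨s ∘ Fin.succ, t ∘ j.succAbove, hs.comp Fin.strictMono_succ,
      ht.comp (Fin.strictMono_succAbove j), ?_⟩
    have heq : (g.submatrix s t).submatrix Fin.succ j.succAbove
        = g.submatrix (s ∘ Fin.succ) (t ∘ j.succAbove) := by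
      funext i' j'; rfl
    rw [heq] at hj
    rcases lt_or_eq_of_le (htnn m (s ∘ Fin.succ) (t ∘ j.succAbove)
      (hs.comp Fin.strictMono_succ) (ht.comp (Fin.strictMono_succAbove j))) with h | h
    · exact h
    · exact absurd h.symm hj



lemma one_le_sq_of_ne (a b : ℕ) (hab : a ≠ b) : (1:ℝ) ≤ ((a:ℝ) - (b:ℝ))^2 := by
  rcases lt_or_gt_of_ne hab with h | h
  · have : (a:ℝ) + 1 ≤ (b:ℝ) := by exact_mod_cast h
    nlinarith
  · have : (b:ℝ) + 1 ≤ (a:ℝ) := by exact_mod_cast h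
    nlinarith

/-- Whitney's density theorem: every invertible totally nonnegative real matrix can be
approximated entrywise by totally positive matrices. -/
theorem whitney_density {n : ℕ} (g : Matrix (Fin n) (Fin n) ℝ)
    (hg : IsUnit g.det) (htnn : TotallyNonneg g) :
    ∀ ε : ℝ, 0 < ε → ∃ g' : Matrix (Fin n) (Fin n) ℝ,
      TotallyPos g' ∧ ∀ i j, |g' i j - g i j| < ε := by
  intro ε hε
  classical
  set K : ℝ := ∑ p : Fin n × Fin n, |g p.1 p.2| with hK
  have hK0 : 0 ≤ K := Finset.sum_nonneg fun p _ => abs_nonneg _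
  set q : ℝ := min (1/2 : ℝ) (ε / (K + 1)) with hqdef
  have hq0 : 0 < q := lt_min (by norm_num) (div_pos hε (by linarith))
  have hq1 : q < 1 := lt_of_le_of_lt (min_le_left _ _) (by norm_num)
  set A : Matrix (Fin n) (Fin n) ℝ :=
    Matrix.of (fun i j : Fin n => q ^ ((((i:ℕ):ℝ) - ((j:ℕ):ℝ))^2)) with hA
  have hApos : ∀ a b : Fin n, 0 < A a b := fun a b => Real.rpow_pos_of_pos hq0 _
  have hAle1 : ∀ a b : Fin n, A a b ≤ 1 := fun a b =>
    Real.rpow_le_one (le_of_lt hq0) (le_of_lt hq1) (sq_nonneg _)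
  have hAleq : ∀ a b : Fin n, a ≠ b → A a b ≤ q := by
    intro a b hab
    have h1 : (1:ℝ) ≤ (((a:ℕ):ℝ) - ((b:ℕ):ℝ))^2 :=
      one_le_sq_of_ne a b (fun h => hab (Fin.val_injective h))
    have := Real.rpow_le_rpow_of_exponent_ge hq0 (le_of_lt hq1) h1
    rwa [Real.rpow_one] at this
  refine ⟨A * g * A, ?_, ?_⟩
  · -- total positivity
    intro m f h hf hh
    have hmn : m ≤ n := by
      calc m = Fintype.card (Fin m) := (Fintype.card_fin m).symm
        _ ≤ Fintype.card (Fin n) := Fintype.card_le_of_injective f hf.injective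
        _ = n := Fintype.card_fin n
    obtain ⟨s₀, t₀, hs₀, ht₀, hg₀⟩ := witness_minor g hg htnn (n - m) m (by omega)
    have hsplit1 : (A * g * A).submatrix f h = (A.submatrix f id) * ((g * A).submatrix id h) := by
      rw [mul_assoc]
      exact Matrix.submatrix_mul A (g * A) f id h Function.bijective_id
    have hAsub : ∀ f' : Fin m → Fin n, (A.submatrix f id).submatrix id f' = A.submatrix f f' :=
      fun f' => by funext i' j'; rfl
    have hBsub : ∀ f' : Fin m → Fin n,
        ((g * A).submatrix id h).submatrix f' id = (g.submatrix f' id) * (A.submatrix id h) := by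
      intro f'
      have h1 : ((g * A).submatrix id h).submatrix f' id = (g * A).submatrix f' h := by
        funext i' j'; rfl
      rw [h1]
      exact Matrix.submatrix_mul g A f' id h Function.bijective_id
    have hterm_nonneg : ∀ f' : Fin m → Fin n, StrictMono f' →
        0 ≤ ∑ t' ∈ Finset.univ.filter (fun t' : Fin m → Fin n => StrictMono t'),
          ((g.submatrix f' id).submatrix id t').det * (((A.submatrix id h)).submatrix t' id).det := by
      intro f' hf'
      refine Finset.sum_nonneg fun t' ht' => ?_
      have ht'm : StrictMono t' := (Finset.mem_filter.mp ht').2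
      have e1 : (g.submatrix f' id).submatrix id t' = g.submatrix f' t' := by funext i' j'; rfl
      have e2 : (A.submatrix id h).submatrix t' id = A.submatrix t' h := by funext i' j'; rfl
      rw [e1, e2]
      exact mul_nonneg (htnn m f' t' hf' ht'm) (le_of_lt (gauss_tp q hq0 hq1 t' h ht'm hh))
    rw [hsplit1, cauchy_binet]
    refine Finset.sum_pos' ?_ ?_
    · intro f' hf'
      have hf'm : StrictMono f' := (Finset.mem_filter.mp hf').2
      rw [hAsub f', hBsub f', cauchy_binet]
      exact mul_nonneg (le_of_lt (gauss_tp q hq0 hq1 f f' hf hf'm)) (hterm_nonneg f' hf'm)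
    · refine ⟨s₀, Finset.mem_filter.mpr ⟨Finset.mem_univ _, hs₀⟩, ?_⟩
      rw [hAsub s₀, hBsub s₀, cauchy_binet]
      refine mul_pos (gauss_tp q hq0 hq1 f s₀ hf hs₀) ?_
      refine Finset.sum_pos' ?_ ⟨t₀, Finset.mem_filter.mpr ⟨Finset.mem_univ _, ht₀⟩, ?_⟩
      · intro t' ht'
        have ht'm : StrictMono t' := (Finset.mem_filter.mp ht').2
        have e1 : (g.submatrix s₀ id).submatrix id t' = g.submatrix s₀ t' := by funext i' j'; rfl
        have e2 : (A.submatrix id h).submatrix t' id = A.submatrix t' h := by funext i' j'; rfl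
        rw [e1, e2]
        exact mul_nonneg (htnn m s₀ t' hs₀ ht'm) (le_of_lt (gauss_tp q hq0 hq1 t' h ht'm hh))
      · have e1 : (g.submatrix s₀ id).submatrix id t₀ = g.submatrix s₀ t₀ := by funext i' j'; rfl
        have e2 : (A.submatrix id h).submatrix t₀ id = A.submatrix t₀ h := by funext i' j'; rfl
        rw [e1, e2]
        exact mul_pos hg₀ (gauss_tp q hq0 hq1 t₀ h ht₀ hh)
  · -- entrywise approximation
    intro i j
    set F : Fin n × Fin n → ℝ := fun p => A i p.1 * g p.1 p.2 * A p.2 j with hF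
    have hentry : (A * g * A) i j = ∑ p : Fin n × Fin n, F p := by
      calc (A * g * A) i j = ∑ l, (∑ k, A i k * g k l) * A l j := by
            rw [Matrix.mul_apply]
            exact Finset.sum_congr rfl fun l _ => by rw [Matrix.mul_apply]
        _ = ∑ l, ∑ k, A i k * g k l * A l j := by
            exact Finset.sum_congr rfl fun l _ => by rw [Finset.sum_mul]
        _ = ∑ k, ∑ l, A i k * g k l * A l j := Finset.sum_comm
        _ = ∑ p : Fin n × Fin n, F p := by
            rw [← Finset.univ_product_univ, Finset.sum_product]
    have hAdiag : ∀ a : Fin n, A a a = 1 := by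
      intro a
      show q ^ ((((a:ℕ):ℝ) - ((a:ℕ):ℝ))^2) = 1
      rw [sub_self]
      norm_num
    have hFij : F (i, j) = g i j := by
      rw [hF]
      simp only [hAdiag]
      ring
    have hsplit : (A * g * A) i j - g i j = ∑ p ∈ Finset.univ.erase (i, j), F p := by
      rw [hentry, ← Finset.add_sum_erase Finset.univ F (Finset.mem_univ (i,j)), hFij]
      ring
    have hbound : ∀ p ∈ Finset.univ.erase (i, j), |F p| ≤ q * |g p.1 p.2| := by
      intro p hp
      have hpne : p ≠ (i, j) := Finset.ne_of_mem_erase hp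
      have habs : |F p| = A i p.1 * |g p.1 p.2| * A p.2 j := by
        rw [hF, abs_mul, abs_mul, abs_of_pos (hApos i p.1), abs_of_pos (hApos p.2 j)]
      rw [habs]
      rcases eq_or_ne p.1 i with h1 | h1
      · have h2 : p.2 ≠ j := by
          intro h2
          exact hpne (Prod.ext h1 h2)
        have b1 : A i p.1 ≤ 1 := hAle1 _ _
        have b2 : A p.2 j ≤ q := hAleq _ _ h2
        calc A i p.1 * |g p.1 p.2| * A p.2 j
            ≤ |g p.1 p.2| * q := by
              refine mul_le_mul ?_ b2 (le_of_lt (hApos p.2 j)) (abs_nonneg _)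
              calc A i p.1 * |g p.1 p.2| ≤ 1 * |g p.1 p.2| :=
                    mul_le_mul_of_nonneg_right b1 (abs_nonneg _)
                _ = |g p.1 p.2| := one_mul _
          _ = q * |g p.1 p.2| := mul_comm _ _
      · have b1 : A i p.1 ≤ q := hAleq _ _ (fun h => h1 h.symm)
        have b2 : A p.2 j ≤ 1 := hAle1 _ _
        calc A i p.1 * |g p.1 p.2| * A p.2 j
            ≤ (q * |g p.1 p.2|) * 1 :=
              mul_le_mul (mul_le_mul_of_nonneg_right b1 (abs_nonneg _)) b2
                (le_of_lt (hApos _ _)) (mul_nonneg (le_of_lt hq0) (abs_nonneg _))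
          _ = q * |g p.1 p.2| := mul_one _
    have hsum : |(A * g * A) i j - g i j| ≤ q * K := by
      rw [hsplit]
      calc |∑ p ∈ Finset.univ.erase (i, j), F p| ≤ ∑ p ∈ Finset.univ.erase (i, j), |F p| :=
            Finset.abs_sum_le_sum_abs _ _
        _ ≤ ∑ p ∈ Finset.univ.erase (i, j), q * |g p.1 p.2| := Finset.sum_le_sum hbound
        _ ≤ ∑ p : Fin n × Fin n, q * |g p.1 p.2| := by
            refine Finset.sum_le_sum_of_subset_of_nonneg (Finset.erase_subset _ _) ?_
            intro p _ _
            exact mul_nonneg (le_of_lt hq0) (abs_nonneg _)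
        _ = q * K := by rw [hK, Finset.mul_sum]
    have hqK : q * K < ε := by
      have hqle : q ≤ ε / (K + 1) := min_le_right _ _
      have h1 : q * (K + 1) ≤ ε := by
        rw [← div_mul_cancel₀ ε (show (K:ℝ) + 1 ≠ 0 by linarith)]
        exact mul_le_mul_of_nonneg_right hqle (by linarith)
      nlinarith
    exact lt_of_le_of_lt hsum hqK
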